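/- For service rate μ > 0, traffic intensity 0 < ρ < 1, and deadline D > 0, the pooling gain G(μ,ρ,D) = (P(2μ,ρ,D) - P(μ,ρ,D)) / P(μ,ρ,D) is strictly positive, where P(μ,ρ,D) = (1 - e^{μD(ρ-1)})/(1 - ρ e^{μD(ρ-1)}). -/
import Mathlib

/-- The pooling gain `G(μ,ρ,D) = (P(2μ,ρ,D) - P(μ,ρ,D))/P(μ,ρ,D)` is strictly positive,
where `P(μ,ρ,D) = (1 - e^{μD(ρ-1)})/(1 - ρ e^{μD(ρ-1)})`. -/
theorem pooling_gain_pos (μ ρ D : ℝ) (hμ : 0 < μ) (hρ0 : 0 < ρ) (hρ1 : ρ < 1) (hD : 0 < D) :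
    0 <
      (((1 - Real.exp ((2 * μ) * D * (ρ - 1))) / (1 - ρ * Real.exp ((2 * μ) * D * (ρ - 1))))
        - ((1 - Real.exp (μ * D * (ρ - 1))) / (1 - ρ * Real.exp (μ * D * (ρ - 1))))) /
      ((1 - Real.exp (μ * D * (ρ - 1))) / (1 - ρ * Real.exp (μ * D * (ρ - 1)))) := by
  set x := Real.exp (μ * D * (ρ - 1)) with hxdef
  set y := Real.exp ((2 * μ) * D * (ρ - 1)) with hydef
  have hx0 : 0 < x := Real.exp_pos _
  have hy0 : 0 < y := Real.exp_pos _
  have hx1 : x < 1 := by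
    rw [hxdef, Real.exp_lt_one_iff]
    nlinarith [mul_pos hμ hD]
  have hyx : y < x := by
    rw [hxdef, hydef, Real.exp_lt_exp]
    nlinarith [mul_pos hμ hD]
  have hdx : 0 < 1 - ρ * x := by nlinarith
  have hdy : 0 < 1 - ρ * y := by nlinarith
  have hPx : 0 < (1 - x) / (1 - ρ * x) := div_pos (by linarith) hdx
  apply div_pos _ hPx
  rw [div_sub_div _ _ (ne_of_gt hdy) (ne_of_gt hdx)]
  apply div_pos
  · nlinarith
  · positivity
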